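/- arXiv:math/0610861 — 2 statements merged into one kernel-verified Lean document; each statement's English description precedes it below -/
import Mathlib

section
/- For every point x in the period domain 𝒫 = {x ∈ GL(2,ℂ) : Im(x₁·conj(x₃)) > 0}, there exists a unique g ∈ G₀ (the group of invertible upper-triangular complex 2×2 matrices) such that x·g⁻¹ = [[z,-1],[1,0]] for some z ∈ ℍ; namely g = [[x₃, x₄],[0, det(x)/x₃]] and z = x₁/x₃. -/
/-!
Factor `x = [[z, -1], [1, 0]] * g` with `g` upper triangular: comparing entries, the top row of
`g` is the bottom row `(x₃, x₄)` of `x`, then `z = x₁ / x₃`, and `det g = det x` fixes the last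
entry. The factorisation is therefore unique, and `Im z > 0` because
`x₁ / x₃ = x₁ * conj x₃ / |x₃|²`.
-/

open Matrix Complex
local notation "conj" => starRingEnd ℂ

theorem Complex.div_im_eq_mul_conj_im_div_normSq (a b : ℂ) :
    (a / b).im = (a * conj b).im / normSq b := by
  rw [div_im, mul_im, conj_re, conj_im]
  ring

theorem Complex.ne_zero_of_mul_conj_im_pos {a b : ℂ} (h : 0 < (a * conj b).im) : b ≠ 0 := by
  rintro rfl
  simp at h

theorem Complex.div_im_pos_of_mul_conj_im_pos {a b : ℂ} (h : 0 < (a * conj b).im) :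
    0 < (a / b).im := by
  rw [div_im_eq_mul_conj_im_div_normSq]
  exact div_pos h (normSq_pos.2 (ne_zero_of_mul_conj_im_pos h))

namespace Matrix

theorem mul_nonsing_inv_eq_iff_eq_mul {n m α : Type*} [Fintype n] [DecidableEq n] [CommRing α]
    {A : Matrix n n α} (hA : IsUnit A.det) (B C : Matrix m n α) : B * A⁻¹ = C ↔ B = C * A :=
  letI := A.invertibleOfIsUnitDet hA
  mul_inv_eq_iff_eq_mul_of_invertible A B C

variable {K : Type*} [Field K]

theorem fin_two_eq_mul_upperTriangular (x : Matrix (Fin 2) (Fin 2) K) (h : x 1 0 ≠ 0) :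
    x = !![x 0 0 / x 1 0, -1; 1, 0] * !![x 1 0, x 1 1; 0, x.det / x 1 0] := by
  ext i j
  fin_cases i <;> fin_cases j <;> simp [det_fin_two, h]
  field_simp
  ring

theorem upperTriangular_eq_of_eq_mul {x g : Matrix (Fin 2) (Fin 2) K} {z : K}
    (hg₁₀ : g 1 0 = 0) (hg₀₀ : g 0 0 ≠ 0) (hx : x = !![z, -1; 1, 0] * g) :
    g = !![x 1 0, x 1 1; 0, x.det / x 1 0] := by
  rw [eta_fin_two g, hg₁₀] at hx ⊢
  rw [hx]
  simp [det_fin_two]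
  field_simp
  ring

end Matrix

/-- every point x of the period domain is carried to a point of the
embedded upper half plane by a unique element g of the group G₀ of invertible
upper-triangular matrices, namely g = [[x₃,x₄],[0,det(x)/x₃]], z = x₁/x₃. -/
theorem stmt16 (x : Matrix (Fin 2) (Fin 2) ℂ) (hdet : IsUnit x.det)
    (hx : 0 < (x 0 0 * conj (x 1 0)).im) :
    (∃! g : Matrix (Fin 2) (Fin 2) ℂ,
      (g 1 0 = 0 ∧ g 0 0 ≠ 0 ∧ g 1 1 ≠ 0) ∧
      ∃ z : ℂ, 0 < z.im ∧ x * g⁻¹ = !![z, -1; 1, 0]) ∧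
    x * (!![x 1 0, x 1 1; 0, x.det / x 1 0])⁻¹ = !![x 0 0 / x 1 0, -1; 1, 0] := by
  have h₁₀ : x 1 0 ≠ 0 := ne_zero_of_mul_conj_im_pos hx
  set g₀ : Matrix (Fin 2) (Fin 2) ℂ := !![x 1 0, x 1 1; 0, x.det / x 1 0]
  have hg₀ : IsUnit g₀.det := by
    rw [det_fin_two_of, mul_div_cancel₀ _ h₁₀, mul_zero, sub_zero]
    exact hdet
  have hx₀ : x * g₀⁻¹ = !![x 0 0 / x 1 0, -1; 1, 0] :=
    (mul_nonsing_inv_eq_iff_eq_mul hg₀ _ _).2 (fin_two_eq_mul_upperTriangular x h₁₀)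
  refine ⟨⟨g₀, ⟨⟨rfl, h₁₀, div_ne_zero hdet.ne_zero h₁₀⟩, _, div_im_pos_of_mul_conj_im_pos hx, hx₀⟩,
    ?_⟩, hx₀⟩
  rintro g ⟨⟨hg₁₀, hg₀₀, hg₁₁⟩, z, -, hxg⟩
  have hg : IsUnit g.det := by
    rw [det_fin_two, hg₁₀, mul_zero, sub_zero]
    exact (mul_ne_zero hg₀₀ hg₁₁).isUnit
  exact upperTriangular_eq_of_eq_mul hg₁₀ hg₀₀ ((mul_nonsing_inv_eq_iff_eq_mul hg _ _).1 hxg)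
end

section
/- The Eisenstein series g₁, g₂, g₃ (of weights 2, 4, 6 for SL(2,ℤ)) satisfy the Ramanujan relations: dg₁/dz = g₁² - (1/12)g₂, dg₂/dz = 4g₁g₂ - 6g₃, dg₃/dz = 6g₁g₃ - (1/3)g₂², where g_k(z) = a_k(1 + (-1)^k(4k/B_k)Σ_{n≥1} σ_{2k-1}(n)e^{2πizn}) with a₁ = 2πi/12, a₂ = 12(2πi/12)², a₃ = 8(2πi/12)³. -/
open Complex Finset

/-- σ_j(n) = Σ_{d ∣ n} d^j. -/
def sigma' (j n : ℕ) : ℕ := ∑ d ∈ n.divisors, d ^ j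

noncomputable def a₁ : ℂ := 2 * Real.pi * I / 12
noncomputable def a₂ : ℂ := 12 * (2 * Real.pi * I / 12) ^ 2
noncomputable def a₃ : ℂ := 8 * (2 * Real.pi * I / 12) ^ 3

/-- The Eisenstein series g_k(z) = a_k (1 + (-1)^k (4k/B_k) Σ_{n≥1} σ_{2k-1}(n) e^{2πizn}),
with B₁ = 1/6, B₂ = 1/30, B₃ = 1/42. -/
noncomputable def g₁ (z : ℂ) : ℂ :=
  a₁ * (1 + (-1) ^ 1 * (4 * 1 / (1 / 6 : ℂ)) *
    ∑' n : ℕ, (sigma' 1 (n + 1) : ℂ) * Complex.exp (2 * Real.pi * I * z * (n + 1)))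

noncomputable def g₂ (z : ℂ) : ℂ :=
  a₂ * (1 + (-1) ^ 2 * (4 * 2 / (1 / 30 : ℂ)) *
    ∑' n : ℕ, (sigma' 3 (n + 1) : ℂ) * Complex.exp (2 * Real.pi * I * z * (n + 1)))

noncomputable def g₃ (z : ℂ) : ℂ :=
  a₃ * (1 + (-1) ^ 3 * (4 * 3 / (1 / 42 : ℂ)) *
    ∑' n : ℕ, (sigma' 5 (n + 1) : ℂ) * Complex.exp (2 * Real.pi * I * z * (n + 1)))

namespace Stmt17

/-- quadruples (a,b,c,d) of positive naturals with a*b+c*d = N -/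
def T (N : ℕ) : Finset (ℕ × ℕ × ℕ × ℕ) :=
  (Finset.Icc 1 N ×ˢ Finset.Icc 1 N ×ˢ Finset.Icc 1 N ×ˢ Finset.Icc 1 N).filter
    fun x => x.1 * x.2.1 + x.2.2.1 * x.2.2.2 = N

lemma mem_T {N : ℕ} {x : ℕ × ℕ × ℕ × ℕ} :
    x ∈ T N ↔ 1 ≤ x.1 ∧ 1 ≤ x.2.1 ∧ 1 ≤ x.2.2.1 ∧ 1 ≤ x.2.2.2 ∧
      x.1 * x.2.1 + x.2.2.1 * x.2.2.2 = N := by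
  obtain ⟨a, b, c, d⟩ := x
  simp only [T, mem_filter, mem_product, mem_Icc]
  constructor
  · rintro ⟨⟨⟨h1, -⟩, ⟨h2, -⟩, ⟨h3, -⟩, h4, -⟩, h5⟩
    exact ⟨h1, h2, h3, h4, h5⟩
  · rintro ⟨h1, h2, h3, h4, h5⟩
    have hab : a * b ≤ N := le_of_add_le_left h5.le
    have hcd : c * d ≤ N := le_of_add_le_right h5.le
    have e1 : a ≤ N := le_trans (Nat.le_mul_of_pos_right a h2) hab
    have e2 : b ≤ N := le_trans (Nat.le_mul_of_pos_left b h1) hab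
    have e3 : c ≤ N := le_trans (Nat.le_mul_of_pos_right c h4) hcd
    have e4 : d ≤ N := le_trans (Nat.le_mul_of_pos_left d h3) hcd
    exact ⟨⟨⟨h1, e1⟩, ⟨h2, e2⟩, ⟨h3, e3⟩, h4, e4⟩, h5⟩

/-- swap transport along ι(a,b,c,d) = (c,d,a,b) -/
lemma sum_swap_T (N : ℕ) (P : ℕ × ℕ × ℕ × ℕ → Prop) [DecidablePred P]
    (f : ℕ × ℕ × ℕ × ℕ → ℤ) :
    ∑ x ∈ (T N).filter P, f x
      = ∑ x ∈ (T N).filter (fun x => P (x.2.2.1, x.2.2.2, x.1, x.2.1)),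
          f (x.2.2.1, x.2.2.2, x.1, x.2.1) := by
  refine Finset.sum_nbij' (fun x => (x.2.2.1, x.2.2.2, x.1, x.2.1))
    (fun x => (x.2.2.1, x.2.2.2, x.1, x.2.1)) ?_ ?_ ?_ ?_ ?_
  · rintro ⟨a, b, c, d⟩ hx
    simp only [mem_filter, mem_T] at hx ⊢
    obtain ⟨⟨h1, h2, h3, h4, h5⟩, hP⟩ := hx
    exact ⟨⟨h3, h4, h1, h2, by omega⟩, hP⟩
  · rintro ⟨a, b, c, d⟩ hx
    simp only [mem_filter, mem_T] at hx ⊢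
    obtain ⟨⟨h1, h2, h3, h4, h5⟩, hP⟩ := hx
    exact ⟨⟨h3, h4, h1, h2, by omega⟩, hP⟩
  · rintro ⟨a, b, c, d⟩ _; rfl
  · rintro ⟨a, b, c, d⟩ _; rfl
  · rintro ⟨a, b, c, d⟩ _; rfl

/-- transport along φ(a,b,c,d) = (a, b-d, a+c, d) : {d<b} ≃ {a<c} -/
lemma sum_phi_T (N : ℕ) (f : ℕ × ℕ × ℕ × ℕ → ℤ) :
    ∑ x ∈ (T N).filter (fun x => x.2.2.2 < x.2.1),
        f (x.1, x.2.1 - x.2.2.2, x.1 + x.2.2.1, x.2.2.2)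
      = ∑ x ∈ (T N).filter (fun x => x.1 < x.2.2.1), f x := by
  refine Finset.sum_nbij' (fun x => (x.1, x.2.1 - x.2.2.2, x.1 + x.2.2.1, x.2.2.2))
    (fun x => (x.1, x.2.1 + x.2.2.2, x.2.2.1 - x.1, x.2.2.2)) ?_ ?_ ?_ ?_ ?_
  · rintro ⟨a, b, c, d⟩ hx
    simp only [mem_filter, mem_T] at hx ⊢
    obtain ⟨⟨h1, h2, h3, h4, h5⟩, hP⟩ := hx
    refine ⟨⟨h1, by omega, by omega, h4, ?_⟩, by omega⟩
    have : a * (b - d) + (a + c) * d = a * (b - d) + a * d + c * d := by ring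
    rw [this, ← Nat.mul_add, Nat.sub_add_cancel hP.le, h5]
  · rintro ⟨a, b, c, d⟩ hx
    simp only [mem_filter, mem_T] at hx ⊢
    obtain ⟨⟨h1, h2, h3, h4, h5⟩, hP⟩ := hx
    refine ⟨⟨h1, by omega, by omega, h4, ?_⟩, by omega⟩
    have : a * (b + d) + (c - a) * d = a * b + (a * d + (c - a) * d) := by ring
    rw [this, ← Nat.add_mul, Nat.add_sub_cancel' hP.le, h5]
  · rintro ⟨a, b, c, d⟩ hx
    simp only [mem_filter, mem_T] at hx
    simp only [Prod.mk.injEq, true_and, and_true]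
    omega
  · rintro ⟨a, b, c, d⟩ hx
    simp only [mem_filter, mem_T] at hx
    simp only [Prod.mk.injEq, true_and, and_true]
    omega
  · rintro ⟨a, b, c, d⟩ _; rfl

end Stmt17

namespace Stmt17
open Finset

def Sg (j n : ℕ) : ℤ := (sigma' j n : ℤ)

def Conv (r s N : ℕ) : ℤ := ∑ j ∈ Ico 1 N, Sg r j * Sg s (N - j)

lemma sum_DA_pow_snd (r N : ℕ) :
    ∑ p ∈ N.divisorsAntidiagonal, ((p.2 : ℤ)) ^ r = Sg r N := by
  rw [Nat.sum_divisorsAntidiagonal' (f := fun _ k => ((k : ℤ)) ^ r)]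
  simp [Sg, sigma']

lemma sum_DA_pow_fst (r N : ℕ) :
    ∑ p ∈ N.divisorsAntidiagonal, ((p.1 : ℤ)) ^ r = Sg r N := by
  rw [Nat.sum_divisorsAntidiagonal (f := fun k _ => ((k : ℤ)) ^ r)]
  simp [Sg, sigma']

lemma sum_trichotomy {α : Type*} (s : Finset α) (f : α → ℤ) (k l : α → ℕ)
    [DecidablePred fun x => k x = l x] [DecidablePred fun x => k x < l x]
    [DecidablePred fun x => l x < k x] :
    ∑ x ∈ s, f x =
      (∑ x ∈ s.filter (fun x => k x = l x), f x)
      + (∑ x ∈ s.filter (fun x => k x < l x), f x)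
      + (∑ x ∈ s.filter (fun x => l x < k x), f x) := by
  classical
  rw [← Finset.sum_filter_add_sum_filter_not s (fun x => k x = l x) f, add_assoc]
  congr 1
  rw [← Finset.sum_filter_add_sum_filter_not (s.filter fun x => ¬ k x = l x)
      (fun x => k x < l x) f, Finset.filter_filter, Finset.filter_filter]
  congr 1
  · exact Finset.sum_congr (Finset.filter_congr fun x _ => by omega) fun _ _ => rfl
  · exact Finset.sum_congr (Finset.filter_congr fun x _ => by omega) fun _ _ => rfl

/-- the a = c diagonal -/
lemma sum_diag_ac (N : ℕ) (g : ℕ → ℕ → ℤ) :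
    ∑ x ∈ (T N).filter (fun x => x.1 = x.2.2.1), g x.2.1 x.2.2.2
      = ∑ p ∈ N.divisorsAntidiagonal, ∑ b ∈ Ico 1 p.2, g b (p.2 - b) := by
  rw [← Finset.sum_sigma (N.divisorsAntidiagonal) (fun p => Ico 1 p.2)
    (fun y => g y.2 (y.1.2 - y.2))]
  refine Finset.sum_nbij' (fun x => ⟨(x.1, x.2.1 + x.2.2.2), x.2.1⟩)
    (fun y => (y.1.1, y.2, y.1.1, y.1.2 - y.2)) ?_ ?_ ?_ ?_ ?_
  · rintro ⟨a, b, c, d⟩ hx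
    simp only [mem_filter, mem_T] at hx
    obtain ⟨⟨h1, h2, h3, h4, h5⟩, hP⟩ := hx
    simp only [Finset.mem_sigma, Nat.mem_divisorsAntidiagonal, mem_Ico]
    have hab : 1 ≤ a * b := Nat.one_le_iff_ne_zero.2 (Nat.mul_ne_zero (by omega) (by omega))
    have hcd : 1 ≤ c * d := Nat.one_le_iff_ne_zero.2 (Nat.mul_ne_zero (by omega) (by omega))
    refine ⟨⟨?_, by omega⟩, h2, by omega⟩
    rw [Nat.mul_add, h5.symm, hP]
  · rintro ⟨⟨e, M⟩, b⟩ hy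
    simp only [Finset.mem_sigma, Nat.mem_divisorsAntidiagonal, mem_Ico] at hy
    obtain ⟨⟨hem, hN0⟩, hb1, hbM⟩ := hy
    have he : 1 ≤ e := by
      rcases Nat.eq_zero_or_pos e with h | h
      · exfalso; apply hN0; rw [← hem, h, zero_mul]
      · exact h
    simp only [mem_filter, mem_T]
    refine ⟨⟨he, hb1, he, by omega, ?_⟩, trivial⟩
    rw [← Nat.mul_add, Nat.add_sub_cancel' (le_of_lt hbM), hem]
  · rintro ⟨a, b, c, d⟩ hx
    simp only [mem_filter, mem_T] at hx
    simp only [Prod.mk.injEq, true_and, and_true]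
    omega
  · rintro ⟨⟨e, M⟩, b⟩ hy
    simp only [Finset.mem_sigma, Nat.mem_divisorsAntidiagonal, mem_Ico] at hy
    simp only [Sigma.mk.inj_iff, Prod.mk.injEq, heq_eq_eq, true_and, and_true]
    omega
  · rintro ⟨a, b, c, d⟩ _
    show g b d = g b (b + d - b)
    rw [Nat.add_sub_cancel_left]

/-- the b = d diagonal -/
lemma sum_diag_bd (N : ℕ) (g : ℕ → ℤ) :
    ∑ x ∈ (T N).filter (fun x => x.2.1 = x.2.2.2), g x.2.2.2
      = ∑ p ∈ N.divisorsAntidiagonal, ((p.2 : ℤ) - 1) * g p.1 := by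
  have : ∀ p ∈ N.divisorsAntidiagonal, ((p.2 : ℤ) - 1) * g p.1
      = ∑ a ∈ Ico 1 p.2, g p.1 := by
    intro p hp
    rw [Finset.sum_const, Nat.card_Ico]
    simp only [Nat.mem_divisorsAntidiagonal] at hp
    have : 1 ≤ p.2 := by
      rcases Nat.eq_zero_or_pos p.2 with h | h
      · exfalso; apply hp.2; rw [← hp.1, h, mul_zero]
      · exact h
    rw [nsmul_eq_mul]
    push_cast [this]
    ring
  rw [Finset.sum_congr rfl this]
  rw [← Finset.sum_sigma (N.divisorsAntidiagonal) (fun p => Ico 1 p.2)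
    (fun y => g y.1.1)]
  refine Finset.sum_nbij' (fun x => ⟨(x.2.1, x.1 + x.2.2.1), x.1⟩)
    (fun y => (y.2, y.1.1, y.1.2 - y.2, y.1.1)) ?_ ?_ ?_ ?_ ?_
  · rintro ⟨a, b, c, d⟩ hx
    simp only [mem_filter, mem_T] at hx
    obtain ⟨⟨h1, h2, h3, h4, h5⟩, hP⟩ := hx
    simp only [Finset.mem_sigma, Nat.mem_divisorsAntidiagonal, mem_Ico]
    have hab : 1 ≤ a * b := Nat.one_le_iff_ne_zero.2 (Nat.mul_ne_zero (by omega) (by omega))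
    have hcd : 1 ≤ c * d := Nat.one_le_iff_ne_zero.2 (Nat.mul_ne_zero (by omega) (by omega))
    refine ⟨⟨?_, by omega⟩, h1, by omega⟩
    rw [Nat.mul_add, ← h5, hP]; ring
  · rintro ⟨⟨e, K⟩, a⟩ hy
    simp only [Finset.mem_sigma, Nat.mem_divisorsAntidiagonal, mem_Ico] at hy
    obtain ⟨⟨hek, hN0⟩, ha1, haK⟩ := hy
    have he : 1 ≤ e := by
      rcases Nat.eq_zero_or_pos e with h | h
      · exfalso; apply hN0; rw [← hek, h, zero_mul]
      · exact h
    simp only [mem_filter, mem_T]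
    refine ⟨⟨ha1, he, by omega, he, ?_⟩, trivial⟩
    have : a * e + (K - a) * e = (a + (K - a)) * e := by ring
    rw [this, Nat.add_sub_cancel' (le_of_lt haK), ← hek]; ring
  · rintro ⟨a, b, c, d⟩ hx
    simp only [mem_filter, mem_T] at hx
    simp only [Prod.mk.injEq, true_and, and_true]
    omega
  · rintro ⟨⟨e, K⟩, a⟩ hy
    simp only [Finset.mem_sigma, Nat.mem_divisorsAntidiagonal, mem_Ico] at hy
    simp only [Sigma.mk.inj_iff, Prod.mk.injEq, heq_eq_eq, true_and, and_true]
    omega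
  · rintro ⟨a, b, c, d⟩ hx
    simp only [mem_filter, mem_T] at hx
    simp only [hx.2]

/-- the convolution of divisor powers as a sum over quadruples -/
lemma sum_T_conv (N : ℕ) (F G : ℕ → ℤ) :
    ∑ x ∈ T N, F x.2.1 * G x.2.2.2
      = ∑ j ∈ Ico 1 N, (∑ p ∈ j.divisorsAntidiagonal, F p.2)
          * (∑ p ∈ (N - j).divisorsAntidiagonal, G p.2) := by
  have : ∀ j ∈ Ico 1 N, (∑ p ∈ j.divisorsAntidiagonal, F p.2)
      * (∑ p ∈ (N - j).divisorsAntidiagonal, G p.2)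
      = ∑ pq ∈ j.divisorsAntidiagonal ×ˢ (N - j).divisorsAntidiagonal,
          F pq.1.2 * G pq.2.2 := by
    intro j _
    rw [Finset.sum_mul_sum, Finset.sum_product]
  rw [Finset.sum_congr rfl this]
  rw [← Finset.sum_sigma (Ico 1 N)
    (fun j => j.divisorsAntidiagonal ×ˢ (N - j).divisorsAntidiagonal)
    (fun y => F y.2.1.2 * G y.2.2.2)]
  refine Finset.sum_nbij' (fun x => ⟨x.1 * x.2.1, ((x.1, x.2.1), (x.2.2.1, x.2.2.2))⟩)
    (fun y => (y.2.1.1, y.2.1.2, y.2.2.1, y.2.2.2)) ?_ ?_ ?_ ?_ ?_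
  · rintro ⟨a, b, c, d⟩ hx
    simp only [mem_T] at hx
    obtain ⟨h1, h2, h3, h4, h5⟩ := hx
    dsimp only
    have hab : 1 ≤ a * b := Nat.one_le_iff_ne_zero.2 (Nat.mul_ne_zero (by omega) (by omega))
    have hcd : 1 ≤ c * d := Nat.one_le_iff_ne_zero.2 (Nat.mul_ne_zero (by omega) (by omega))
    simp only [Finset.mem_sigma, mem_Ico, Finset.mem_product, Nat.mem_divisorsAntidiagonal]
    refine ⟨⟨hab, by omega⟩, ⟨trivial, by omega⟩, by omega, by omega⟩
  · rintro ⟨j, ⟨a, b⟩, c, d⟩ hy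
    simp only [Finset.mem_sigma, mem_Ico, Finset.mem_product,
      Nat.mem_divisorsAntidiagonal] at hy
    obtain ⟨⟨hj1, hjN⟩, ⟨hab, -⟩, hcd, -⟩ := hy
    simp only [mem_T]
    have ha : a ≠ 0 := by rintro rfl; rw [zero_mul] at hab; omega
    have hb : b ≠ 0 := by rintro rfl; rw [mul_zero] at hab; omega
    have hc : c ≠ 0 := by rintro rfl; rw [zero_mul] at hcd; omega
    have hd : d ≠ 0 := by rintro rfl; rw [mul_zero] at hcd; omega
    exact ⟨by omega, by omega, by omega, by omega, by omega⟩
  · rintro ⟨a, b, c, d⟩ _; rfl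
  · rintro ⟨j, ⟨a, b⟩, c, d⟩ hy
    simp only [Finset.mem_sigma, mem_Ico, Finset.mem_product,
      Nat.mem_divisorsAntidiagonal] at hy
    simp only [Sigma.mk.inj_iff, Prod.mk.injEq, heq_eq_eq, true_and, and_true]
    omega
  · rintro ⟨a, b, c, d⟩ _; rfl

lemma sum_T_pow (N : ℕ) (r s : ℕ) :
    ∑ x ∈ T N, ((x.2.1 : ℤ)) ^ r * ((x.2.2.2 : ℤ)) ^ s = Conv r s N := by
  rw [sum_T_conv N (fun b => (b : ℤ) ^ r) (fun d => (d : ℤ) ^ s)]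
  unfold Conv
  refine Finset.sum_congr rfl fun j _ => ?_
  rw [sum_DA_pow_snd, sum_DA_pow_snd]

lemma conv_comm (r s N : ℕ) : Conv r s N = Conv s r N := by
  unfold Conv
  refine Finset.sum_nbij' (fun j => N - j) (fun j => N - j) ?_ ?_ ?_ ?_ ?_ <;>
    intro j hj <;> rw [mem_Ico] at hj
  · rw [mem_Ico]; omega
  · rw [mem_Ico]; omega
  · omega
  · omega
  · rw [show N - (N - j) = j by omega]; ring

end Stmt17

namespace Stmt17
open Finset

/-- THE master identity: for a weight `W` invariant under `(x,y) ↦ (y,x)` and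
`(x,y) ↦ (-x, x+y)`, telescoping along the bijection
`(a,b,c,d) ↦ (a, b-d, a+c, d)` on `{ab+cd = N}`. -/
lemma master (N : ℕ) (W : ℤ → ℤ → ℤ)
    (hsym : ∀ x y, W x y = W y x) (hinv : ∀ x y, W (-x) (x + y) = W x y) :
    ∑ x ∈ T N, (W x.2.1 x.2.2.2 - W ((x.2.1 : ℤ) - (x.2.2.2 : ℤ)) x.2.2.2)
      = (∑ p ∈ N.divisorsAntidiagonal, ∑ b ∈ Ico 1 p.2, W b ((p.2 - b : ℕ) : ℤ))
        - ∑ p ∈ N.divisorsAntidiagonal, ((p.2 : ℤ) - 1) * W 0 p.1 := by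
  have key : ∀ bz dz : ℤ, W (dz - bz) bz = W (bz - dz) dz := by
    intro bz dz
    have e : W (dz - bz) bz = W (-(bz - dz)) ((bz - dz) + dz) := by congr 1 <;> ring
    rw [e, hinv]
  rw [Finset.sum_sub_distrib]
  have h1 := sum_trichotomy (T N) (fun x => W x.2.1 x.2.2.2)
    (fun x => x.1) (fun x => x.2.2.1)
  have h2 := sum_trichotomy (T N) (fun x => W ((x.2.1 : ℤ) - (x.2.2.2 : ℤ)) x.2.2.2)
    (fun x => x.2.1) (fun x => x.2.2.2)
  -- the common off-diagonal quantity
  set R := ∑ x ∈ (T N).filter (fun x => x.2.2.2 < x.2.1),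
      W ((x.2.1 : ℤ) - (x.2.2.2 : ℤ)) x.2.2.2 with hR
  -- a < c piece equals R
  have c1 : ∑ x ∈ (T N).filter (fun x => x.1 < x.2.2.1), W x.2.1 x.2.2.2 = R := by
    rw [← sum_phi_T N (fun x => W x.2.1 x.2.2.2), hR]
    refine Finset.sum_congr rfl fun x hx => ?_
    simp only [mem_filter, mem_T] at hx
    have : ((x.2.1 - x.2.2.2 : ℕ) : ℤ) = (x.2.1 : ℤ) - (x.2.2.2 : ℤ) := by omega
    rw [this]
  -- c < a piece equals R
  have c2 : ∑ x ∈ (T N).filter (fun x => x.2.2.1 < x.1), W x.2.1 x.2.2.2 = R := by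
    rw [sum_swap_T N (fun x => x.2.2.1 < x.1) (fun x => W x.2.1 x.2.2.2)]
    simp only
    rw [← c1]
    exact Finset.sum_congr rfl fun x hx => hsym _ _
  -- b < d piece equals R
  have c3 : ∑ x ∈ (T N).filter (fun x => x.2.1 < x.2.2.2),
      W ((x.2.1 : ℤ) - (x.2.2.2 : ℤ)) x.2.2.2 = R := by
    rw [sum_swap_T N (fun x => x.2.1 < x.2.2.2)
      (fun x => W ((x.2.1 : ℤ) - (x.2.2.2 : ℤ)) x.2.2.2)]
    simp only
    rw [hR]
    exact Finset.sum_congr rfl fun x hx => key _ _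
  -- b = d piece
  have c4 : ∑ x ∈ (T N).filter (fun x => x.2.1 = x.2.2.2),
      W ((x.2.1 : ℤ) - (x.2.2.2 : ℤ)) x.2.2.2
      = ∑ p ∈ N.divisorsAntidiagonal, ((p.2 : ℤ) - 1) * W 0 p.1 := by
    rw [← sum_diag_bd N (fun e => W 0 e)]
    refine Finset.sum_congr rfl fun x hx => ?_
    simp only [mem_filter] at hx
    rw [hx.2]
    simp
  have c5 : ∑ x ∈ (T N).filter (fun x => x.1 = x.2.2.1), W x.2.1 x.2.2.2
      = ∑ p ∈ N.divisorsAntidiagonal, ∑ b ∈ Ico 1 p.2, W b ((p.2 - b : ℕ) : ℤ) :=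
    sum_diag_ac N (fun b d => W b d)
  rw [h1, h2, c1, c2, c3, c4, c5]
  ring

end Stmt17

namespace Stmt17
open Finset

lemma sum_poly (M : ℕ) (a0 a1 a2 a3 a4 a5 a6 : ℤ) :
    420 * ∑ b ∈ range M, (a0 + a1*(b:ℤ) + a2*(b:ℤ)^2 + a3*(b:ℤ)^3 + a4*(b:ℤ)^4
        + a5*(b:ℤ)^5 + a6*(b:ℤ)^6)
      = 420*(M:ℤ)*a0 + 210*(M:ℤ)*((M:ℤ)-1)*a1 + 70*(M:ℤ)*((M:ℤ)-1)*(2*(M:ℤ)-1)*a2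
        + 105*(M:ℤ)^2*((M:ℤ)-1)^2*a3
        + 14*(M:ℤ)*((M:ℤ)-1)*(2*(M:ℤ)-1)*(3*(M:ℤ)^2-3*(M:ℤ)-1)*a4
        + 35*(M:ℤ)^2*((M:ℤ)-1)^2*(2*(M:ℤ)^2-2*(M:ℤ)-1)*a5
        + 10*(M:ℤ)*((M:ℤ)-1)*(2*(M:ℤ)-1)*(3*(M:ℤ)^4-6*(M:ℤ)^3+3*(M:ℤ)+1)*a6 := by
  induction M with
  | zero => simp
  | succ M ih =>
    rw [Finset.sum_range_succ, mul_add, ih]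
    push_cast
    ring

lemma sum_Ico_poly (M : ℕ) (hM : 1 ≤ M) (a0 a1 a2 a3 a4 a5 a6 : ℤ) :
    420 * ∑ b ∈ Ico 1 M, (a0 + a1*(b:ℤ) + a2*(b:ℤ)^2 + a3*(b:ℤ)^3 + a4*(b:ℤ)^4
        + a5*(b:ℤ)^5 + a6*(b:ℤ)^6)
      = 420*(M:ℤ)*a0 + 210*(M:ℤ)*((M:ℤ)-1)*a1 + 70*(M:ℤ)*((M:ℤ)-1)*(2*(M:ℤ)-1)*a2
        + 105*(M:ℤ)^2*((M:ℤ)-1)^2*a3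
        + 14*(M:ℤ)*((M:ℤ)-1)*(2*(M:ℤ)-1)*(3*(M:ℤ)^2-3*(M:ℤ)-1)*a4
        + 35*(M:ℤ)^2*((M:ℤ)-1)^2*(2*(M:ℤ)^2-2*(M:ℤ)-1)*a5
        + 10*(M:ℤ)*((M:ℤ)-1)*(2*(M:ℤ)-1)*(3*(M:ℤ)^4-6*(M:ℤ)^3+3*(M:ℤ)+1)*a6
        - 420*a0 := by
  have h := sum_poly M a0 a1 a2 a3 a4 a5 a6
  rw [Finset.range_eq_Ico, Finset.sum_eq_sum_Ico_succ_bot (by omega : 0 < M)] at h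
  push_cast at h
  linear_combination h

/-- 420 · Σ_{M | N} Σ_{b=1}^{M-1} W(b, M-b) as a combination of σ's, generic step -/
lemma diag_sum (N : ℕ) (W : ℤ → ℤ → ℤ) (Q : ℤ → ℤ)
    (h : ∀ M : ℕ, 1 ≤ M → 420 * ∑ b ∈ Ico 1 M, W b ((M - b : ℕ) : ℤ) = Q (M : ℤ)) :
    420 * ∑ p ∈ N.divisorsAntidiagonal, ∑ b ∈ Ico 1 p.2, W b ((p.2 - b : ℕ) : ℤ)
      = ∑ p ∈ N.divisorsAntidiagonal, Q (p.2 : ℤ) := by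
  rw [Finset.mul_sum]
  refine Finset.sum_congr rfl fun p hp => ?_
  simp only [Nat.mem_divisorsAntidiagonal] at hp
  have h2 : 1 ≤ p.2 := by
    rcases Nat.eq_zero_or_pos p.2 with h0 | h0
    · exfalso; apply hp.2; rw [← hp.1, h0, mul_zero]
    · exact h0
  exact h p.2 h2

/-- Σ_p ((p.2 : ℤ) - 1) * p.1^j = N·σ_{j-1} - σ_j -/
lemma diag_bd_pow (N : ℕ) (j : ℕ) :
    ∑ p ∈ N.divisorsAntidiagonal, ((p.2 : ℤ) - 1) * (p.1 : ℤ)^(j+1)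
      = (N : ℤ) * Sg j N - Sg (j+1) N := by
  have : ∀ p ∈ N.divisorsAntidiagonal, ((p.2 : ℤ) - 1) * (p.1 : ℤ)^(j+1)
      = (N : ℤ) * (p.1 : ℤ)^j - (p.1 : ℤ)^(j+1) := by
    intro p hp
    simp only [Nat.mem_divisorsAntidiagonal] at hp
    have : ((p.1 : ℤ)) * (p.2 : ℤ) = (N : ℤ) := by exact_mod_cast congrArg Nat.cast hp.1
    linear_combination ((p.1:ℤ))^j * this
  rw [Finset.sum_congr rfl this, Finset.sum_sub_distrib, ← Finset.mul_sum,
    sum_DA_pow_fst, sum_DA_pow_fst]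

end Stmt17

namespace Stmt17
open Finset

def Wp (x y : ℤ) : ℤ := x^2 + x*y + y^2
def Wp2 (x y : ℤ) : ℤ := (x^2 + x*y + y^2)^2
def Wp3 (x y : ℤ) : ℤ := (x^2 + x*y + y^2)^3
def Wr2 (x y : ℤ) : ℤ := (x*y*(x+y))^2

lemma cast_sub_of_Ico {M b : ℕ} (hb : b ∈ Ico 1 M) : ((M - b : ℕ) : ℤ) = (M:ℤ) - (b:ℤ) := by
  rw [mem_Ico] at hb; omega

lemma inner_p (M : ℕ) (hM : 1 ≤ M) :
    420 * ∑ b ∈ Ico 1 M, Wp b ((M - b : ℕ) : ℤ)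
      = 350*(M:ℤ)^3 - 420*(M:ℤ)^2 + 70*(M:ℤ) := by
  have step : ∑ b ∈ Ico 1 M, Wp b ((M - b : ℕ) : ℤ)
      = ∑ b ∈ Ico 1 M, ((M:ℤ)^2 + (-(M:ℤ))*(b:ℤ) + 1*(b:ℤ)^2 + 0*(b:ℤ)^3 + 0*(b:ℤ)^4
          + 0*(b:ℤ)^5 + 0*(b:ℤ)^6) := by
    refine Finset.sum_congr rfl fun b hb => ?_
    rw [cast_sub_of_Ico hb, Wp]; ring
  rw [step, sum_Ico_poly M hM]; ring

lemma inner_p2 (M : ℕ) (hM : 1 ≤ M) :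
    420 * ∑ b ∈ Ico 1 M, Wp2 b ((M - b : ℕ) : ℤ)
      = 294*(M:ℤ)^5 - 420*(M:ℤ)^4 + 140*(M:ℤ)^3 - 14*(M:ℤ) := by
  have step : ∑ b ∈ Ico 1 M, Wp2 b ((M - b : ℕ) : ℤ)
      = ∑ b ∈ Ico 1 M, ((M:ℤ)^4 + (-2*(M:ℤ)^3)*(b:ℤ) + (3*(M:ℤ)^2)*(b:ℤ)^2
          + (-2*(M:ℤ))*(b:ℤ)^3 + 1*(b:ℤ)^4 + 0*(b:ℤ)^5 + 0*(b:ℤ)^6) := by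
    refine Finset.sum_congr rfl fun b hb => ?_
    rw [cast_sub_of_Ico hb, Wp2]; ring
  rw [step, sum_Ico_poly M hM]; ring

lemma inner_p3 (M : ℕ) (hM : 1 ≤ M) :
    420 * ∑ b ∈ Ico 1 M, Wp3 b ((M - b : ℕ) : ℤ)
      = 249*(M:ℤ)^7 - 420*(M:ℤ)^6 + 210*(M:ℤ)^5 - 49*(M:ℤ)^3 + 10*(M:ℤ) := by
  have step : ∑ b ∈ Ico 1 M, Wp3 b ((M - b : ℕ) : ℤ)
      = ∑ b ∈ Ico 1 M, ((M:ℤ)^6 + (-3*(M:ℤ)^5)*(b:ℤ) + (6*(M:ℤ)^4)*(b:ℤ)^2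
          + (-7*(M:ℤ)^3)*(b:ℤ)^3 + (6*(M:ℤ)^2)*(b:ℤ)^4 + (-3*(M:ℤ))*(b:ℤ)^5
          + 1*(b:ℤ)^6) := by
    refine Finset.sum_congr rfl fun b hb => ?_
    rw [cast_sub_of_Ico hb, Wp3]; ring
  rw [step, sum_Ico_poly M hM]; ring

lemma inner_r2 (M : ℕ) (hM : 1 ≤ M) :
    420 * ∑ b ∈ Ico 1 M, Wr2 b ((M - b : ℕ) : ℤ)
      = 14*(M:ℤ)^7 - 14*(M:ℤ)^3 := by
  have step : ∑ b ∈ Ico 1 M, Wr2 b ((M - b : ℕ) : ℤ)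
      = ∑ b ∈ Ico 1 M, (0 + 0*(b:ℤ) + ((M:ℤ)^4)*(b:ℤ)^2 + (-2*(M:ℤ)^3)*(b:ℤ)^3
          + ((M:ℤ)^2)*(b:ℤ)^4 + 0*(b:ℤ)^5 + 0*(b:ℤ)^6) := by
    refine Finset.sum_congr rfl fun b hb => ?_
    rw [cast_sub_of_Ico hb, Wr2]; ring
  rw [step, sum_Ico_poly M hM]; ring

/-- Σ_{M|N} (α7 M^7 + α6 M^6 + α5 M^5 + α4 M^4 + α3 M^3 + α2 M^2 + α1 M) -/
lemma DA_poly (N : ℕ) (α1 α2 α3 α4 α5 α6 α7 : ℤ) :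
    ∑ p ∈ N.divisorsAntidiagonal,
        (α1*(p.2:ℤ)^1 + α2*(p.2:ℤ)^2 + α3*(p.2:ℤ)^3 + α4*(p.2:ℤ)^4 + α5*(p.2:ℤ)^5
          + α6*(p.2:ℤ)^6 + α7*(p.2:ℤ)^7)
      = α1 * Sg 1 N + α2 * Sg 2 N + α3 * Sg 3 N + α4 * Sg 4 N + α5 * Sg 5 N
        + α6 * Sg 6 N + α7 * Sg 7 N := by
  simp only [Finset.sum_add_distrib, ← Finset.mul_sum, sum_DA_pow_snd]

lemma F1 (N : ℕ) :
    840 * Conv 1 1 N = 350 * Sg 3 N + 70 * Sg 1 N - 420 * (N:ℤ) * Sg 1 N := by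
  have hm := master N Wp (fun x y => by rw [Wp, Wp]; ring) (fun x y => by rw [Wp, Wp]; ring)
  have hL : ∑ x ∈ T N, (Wp (x.2.1:ℤ) (x.2.2.2:ℤ)
        - Wp ((x.2.1 : ℤ) - (x.2.2.2 : ℤ)) (x.2.2.2:ℤ)) = 2 * Conv 1 1 N := by
    rw [← sum_T_pow N 1 1, Finset.mul_sum]
    refine Finset.sum_congr rfl fun x _ => ?_
    rw [Wp, Wp]; ring
  have hD := diag_sum N Wp (fun M => 350*M^3 - 420*M^2 + 70*M) inner_p
  have hQ : ∑ p ∈ N.divisorsAntidiagonal,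
      (350*(p.2:ℤ)^3 - 420*(p.2:ℤ)^2 + 70*(p.2:ℤ)) = 350 * Sg 3 N - 420 * Sg 2 N
        + 70 * Sg 1 N := by
    calc ∑ p ∈ N.divisorsAntidiagonal, (350*(p.2:ℤ)^3 - 420*(p.2:ℤ)^2 + 70*(p.2:ℤ))
        = ∑ p ∈ N.divisorsAntidiagonal, (70*(p.2:ℤ)^1 + (-420)*(p.2:ℤ)^2 + 350*(p.2:ℤ)^3
            + 0*(p.2:ℤ)^4 + 0*(p.2:ℤ)^5 + 0*(p.2:ℤ)^6 + 0*(p.2:ℤ)^7) :=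
          Finset.sum_congr rfl fun p _ => by ring
      _ = 70 * Sg 1 N + (-420) * Sg 2 N + 350 * Sg 3 N + 0 * Sg 4 N + 0 * Sg 5 N
            + 0 * Sg 6 N + 0 * Sg 7 N := DA_poly N 70 (-420) 350 0 0 0 0
      _ = 350 * Sg 3 N - 420 * Sg 2 N + 70 * Sg 1 N := by ring
  have hW0 : ∑ p ∈ N.divisorsAntidiagonal, ((p.2 : ℤ) - 1) * Wp 0 (p.1:ℤ)
      = ∑ p ∈ N.divisorsAntidiagonal, ((p.2 : ℤ) - 1) * (p.1:ℤ)^(1+1) := by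
    refine Finset.sum_congr rfl fun p _ => by rw [Wp]; ring
  have hB := diag_bd_pow N 1
  have hQ2 : (fun M : ℤ => 350*M^3 - 420*M^2 + 70*M) = fun M : ℤ => 350*M^3 - 420*M^2 + 70*M := rfl
  -- combine
  have hDQ : 420 * ∑ p ∈ N.divisorsAntidiagonal, ∑ b ∈ Ico 1 p.2, Wp b ((p.2 - b : ℕ) : ℤ)
      = 350 * Sg 3 N - 420 * Sg 2 N + 70 * Sg 1 N := by
    rw [hD, ← hQ]
  linear_combination 420 * hm - 420 * hL + hDQ - 420 * hW0 - 420 * hB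

lemma F2 (N : ℕ) :
    3360 * Conv 1 3 N = 294 * Sg 5 N + 140 * Sg 3 N - 14 * Sg 1 N
      - 420 * (N:ℤ) * Sg 3 N := by
  have hm := master N Wp2 (fun x y => by rw [Wp2, Wp2]; ring) (fun x y => by rw [Wp2, Wp2]; ring)
  have hL : ∑ x ∈ T N, (Wp2 (x.2.1:ℤ) (x.2.2.2:ℤ)
        - Wp2 ((x.2.1 : ℤ) - (x.2.2.2 : ℤ)) (x.2.2.2:ℤ))
      = 4 * Conv 3 1 N + 4 * Conv 1 3 N := by
    rw [← sum_T_pow N 3 1, ← sum_T_pow N 1 3, Finset.mul_sum, Finset.mul_sum,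
      ← Finset.sum_add_distrib]
    refine Finset.sum_congr rfl fun x _ => ?_
    rw [Wp2, Wp2]; ring
  have hD := diag_sum N Wp2 (fun M => 294*M^5 - 420*M^4 + 140*M^3 - 14*M) inner_p2
  have hQ : ∑ p ∈ N.divisorsAntidiagonal,
      (294*(p.2:ℤ)^5 - 420*(p.2:ℤ)^4 + 140*(p.2:ℤ)^3 - 14*(p.2:ℤ))
      = 294 * Sg 5 N - 420 * Sg 4 N + 140 * Sg 3 N - 14 * Sg 1 N := by
    calc ∑ p ∈ N.divisorsAntidiagonal,
          (294*(p.2:ℤ)^5 - 420*(p.2:ℤ)^4 + 140*(p.2:ℤ)^3 - 14*(p.2:ℤ))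
        = ∑ p ∈ N.divisorsAntidiagonal, ((-14)*(p.2:ℤ)^1 + 0*(p.2:ℤ)^2 + 140*(p.2:ℤ)^3
            + (-420)*(p.2:ℤ)^4 + 294*(p.2:ℤ)^5 + 0*(p.2:ℤ)^6 + 0*(p.2:ℤ)^7) :=
          Finset.sum_congr rfl fun p _ => by ring
      _ = (-14) * Sg 1 N + 0 * Sg 2 N + 140 * Sg 3 N + (-420) * Sg 4 N + 294 * Sg 5 N
            + 0 * Sg 6 N + 0 * Sg 7 N := DA_poly N (-14) 0 140 (-420) 294 0 0
      _ = 294 * Sg 5 N - 420 * Sg 4 N + 140 * Sg 3 N - 14 * Sg 1 N := by ring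
  have hW0 : ∑ p ∈ N.divisorsAntidiagonal, ((p.2 : ℤ) - 1) * Wp2 0 (p.1:ℤ)
      = ∑ p ∈ N.divisorsAntidiagonal, ((p.2 : ℤ) - 1) * (p.1:ℤ)^(3+1) := by
    refine Finset.sum_congr rfl fun p _ => by rw [Wp2]; ring
  have hB := diag_bd_pow N 3
  have hDQ : 420 * ∑ p ∈ N.divisorsAntidiagonal, ∑ b ∈ Ico 1 p.2, Wp2 b ((p.2 - b : ℕ) : ℤ)
      = 294 * Sg 5 N - 420 * Sg 4 N + 140 * Sg 3 N - 14 * Sg 1 N := by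
    rw [hD, ← hQ]
  have hcc := conv_comm 3 1 N
  linear_combination 420 * hm - 420 * hL + hDQ - 420 * hW0 - 420 * hB - 1680 * hcc

lemma F3 (N : ℕ) :
    5040 * Conv 1 5 N + 5880 * Conv 3 3 N
      = 249 * Sg 7 N + 210 * Sg 5 N - 49 * Sg 3 N + 10 * Sg 1 N
        - 420 * (N:ℤ) * Sg 5 N := by
  have hm := master N Wp3 (fun x y => by rw [Wp3, Wp3]; ring) (fun x y => by rw [Wp3, Wp3]; ring)
  have hL : ∑ x ∈ T N, (Wp3 (x.2.1:ℤ) (x.2.2.2:ℤ)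
        - Wp3 ((x.2.1 : ℤ) - (x.2.2.2 : ℤ)) (x.2.2.2:ℤ))
      = 6 * Conv 5 1 N + 6 * Conv 1 5 N + 14 * Conv 3 3 N := by
    rw [← sum_T_pow N 5 1, ← sum_T_pow N 1 5, ← sum_T_pow N 3 3, Finset.mul_sum,
      Finset.mul_sum, Finset.mul_sum, ← Finset.sum_add_distrib, ← Finset.sum_add_distrib]
    refine Finset.sum_congr rfl fun x _ => ?_
    rw [Wp3, Wp3]; ring
  have hD := diag_sum N Wp3 (fun M => 249*M^7 - 420*M^6 + 210*M^5 - 49*M^3 + 10*M) inner_p3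
  have hQ : ∑ p ∈ N.divisorsAntidiagonal,
      (249*(p.2:ℤ)^7 - 420*(p.2:ℤ)^6 + 210*(p.2:ℤ)^5 - 49*(p.2:ℤ)^3 + 10*(p.2:ℤ))
      = 249 * Sg 7 N - 420 * Sg 6 N + 210 * Sg 5 N - 49 * Sg 3 N + 10 * Sg 1 N := by
    calc ∑ p ∈ N.divisorsAntidiagonal,
          (249*(p.2:ℤ)^7 - 420*(p.2:ℤ)^6 + 210*(p.2:ℤ)^5 - 49*(p.2:ℤ)^3 + 10*(p.2:ℤ))
        = ∑ p ∈ N.divisorsAntidiagonal, (10*(p.2:ℤ)^1 + 0*(p.2:ℤ)^2 + (-49)*(p.2:ℤ)^3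
            + 0*(p.2:ℤ)^4 + 210*(p.2:ℤ)^5 + (-420)*(p.2:ℤ)^6 + 249*(p.2:ℤ)^7) :=
          Finset.sum_congr rfl fun p _ => by ring
      _ = 10 * Sg 1 N + 0 * Sg 2 N + (-49) * Sg 3 N + 0 * Sg 4 N + 210 * Sg 5 N
            + (-420) * Sg 6 N + 249 * Sg 7 N := DA_poly N 10 0 (-49) 0 210 (-420) 249
      _ = 249 * Sg 7 N - 420 * Sg 6 N + 210 * Sg 5 N - 49 * Sg 3 N + 10 * Sg 1 N := by ring
  have hW0 : ∑ p ∈ N.divisorsAntidiagonal, ((p.2 : ℤ) - 1) * Wp3 0 (p.1:ℤ)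
      = ∑ p ∈ N.divisorsAntidiagonal, ((p.2 : ℤ) - 1) * (p.1:ℤ)^(5+1) := by
    refine Finset.sum_congr rfl fun p _ => by rw [Wp3]; ring
  have hB := diag_bd_pow N 5
  have hDQ : 420 * ∑ p ∈ N.divisorsAntidiagonal, ∑ b ∈ Ico 1 p.2, Wp3 b ((p.2 - b : ℕ) : ℤ)
      = 249 * Sg 7 N - 420 * Sg 6 N + 210 * Sg 5 N - 49 * Sg 3 N + 10 * Sg 1 N := by
    rw [hD, ← hQ]
  have hcc := conv_comm 5 1 N
  linear_combination 420 * hm - 420 * hL + hDQ - 420 * hW0 - 420 * hB - 2520 * hcc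

lemma F4 (N : ℕ) :
    1680 * Conv 3 3 N = 14 * Sg 7 N - 14 * Sg 3 N := by
  have hm := master N Wr2 (fun x y => by rw [Wr2, Wr2]; ring) (fun x y => by rw [Wr2, Wr2]; ring)
  have hL : ∑ x ∈ T N, (Wr2 (x.2.1:ℤ) (x.2.2.2:ℤ)
        - Wr2 ((x.2.1 : ℤ) - (x.2.2.2 : ℤ)) (x.2.2.2:ℤ)) = 4 * Conv 3 3 N := by
    rw [← sum_T_pow N 3 3, Finset.mul_sum]
    refine Finset.sum_congr rfl fun x _ => ?_
    rw [Wr2, Wr2]; ring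
  have hD := diag_sum N Wr2 (fun M => 14*M^7 - 14*M^3) inner_r2
  have hQ : ∑ p ∈ N.divisorsAntidiagonal, (14*(p.2:ℤ)^7 - 14*(p.2:ℤ)^3)
      = 14 * Sg 7 N - 14 * Sg 3 N := by
    calc ∑ p ∈ N.divisorsAntidiagonal, (14*(p.2:ℤ)^7 - 14*(p.2:ℤ)^3)
        = ∑ p ∈ N.divisorsAntidiagonal, (0*(p.2:ℤ)^1 + 0*(p.2:ℤ)^2 + (-14)*(p.2:ℤ)^3
            + 0*(p.2:ℤ)^4 + 0*(p.2:ℤ)^5 + 0*(p.2:ℤ)^6 + 14*(p.2:ℤ)^7) :=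
          Finset.sum_congr rfl fun p _ => by ring
      _ = 0 * Sg 1 N + 0 * Sg 2 N + (-14) * Sg 3 N + 0 * Sg 4 N + 0 * Sg 5 N + 0 * Sg 6 N
            + 14 * Sg 7 N := DA_poly N 0 0 (-14) 0 0 0 14
      _ = 14 * Sg 7 N - 14 * Sg 3 N := by ring
  have hW0 : ∑ p ∈ N.divisorsAntidiagonal, ((p.2 : ℤ) - 1) * Wr2 0 (p.1:ℤ) = 0 := by
    refine Finset.sum_eq_zero fun p _ => by rw [Wr2]; ring
  have hDQ : 420 * ∑ p ∈ N.divisorsAntidiagonal, ∑ b ∈ Ico 1 p.2, Wr2 b ((p.2 - b : ℕ) : ℤ)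
      = 14 * Sg 7 N - 14 * Sg 3 N := by
    rw [hD, ← hQ]
  linear_combination 420 * hm - 420 * hL + hDQ - 420 * hW0

end Stmt17

namespace Stmt17
open Complex

noncomputable def qexp (c : ℕ → ℂ) (z : ℂ) : ℂ :=
  ∑' n : ℕ, c n * Complex.exp (2 * Real.pi * I * z * n)

/-- polynomial growth of coefficients -/
def Grw (c : ℕ → ℂ) : Prop := ∃ C : ℝ, ∃ k : ℕ, ∀ n : ℕ, ‖c n‖ ≤ C * (n + 1) ^ k

lemma exp_norm (z : ℂ) (n : ℕ) :
    ‖Complex.exp (2 * Real.pi * I * z * n)‖ = Real.exp (-(2 * Real.pi * z.im)) ^ n := by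
  rw [Complex.norm_exp, ← Real.exp_nat_mul]
  congr 1
  have h : 2 * (Real.pi : ℂ) * I * z * (n : ℂ)
      = ((2 * Real.pi * (n : ℝ) : ℝ) : ℂ) * (I * z) := by push_cast; ring
  rw [h, Complex.re_ofReal_mul]
  simp [Complex.mul_re]
  ring

lemma exp_base_pos (y : ℝ) : 0 < Real.exp (-(2 * Real.pi * y)) := Real.exp_pos _

lemma exp_base_lt_one {y : ℝ} (hy : 0 < y) : Real.exp (-(2 * Real.pi * y)) < 1 := by
  rw [show (1:ℝ) = Real.exp 0 by simp]
  refine Real.exp_lt_exp.mpr ?_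
  have := Real.pi_pos
  nlinarith

/-- summability of the geometric-type majorant -/
lemma majorant_summable (C : ℝ) (k : ℕ) {r : ℝ} (hr0 : 0 < r) (hr1 : r < 1) :
    Summable (fun n : ℕ => C * (n + 1 : ℝ) ^ k * r ^ n) := by
  have S0 : Summable (fun m : ℕ => (m : ℝ) ^ k * r ^ m) :=
    summable_pow_mul_geometric_of_norm_lt_one k
      (by rwa [Real.norm_eq_abs, abs_of_pos hr0])
  have S1 : Summable (fun n : ℕ => ((n + 1 : ℕ) : ℝ) ^ k * r ^ (n + 1)) :=
    (summable_nat_add_iff 1).2 S0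
  have S2 := (S1.mul_left (C / r))
  refine S2.congr fun n => ?_
  push_cast
  field_simp
  ring

lemma summable_qexp_norm {c : ℕ → ℂ} (hc : Grw c) {z : ℂ} (hz : 0 < z.im) :
    Summable (fun n : ℕ => ‖c n * Complex.exp (2 * Real.pi * I * z * n)‖) := by
  obtain ⟨C, k, hC⟩ := hc
  set r := Real.exp (-(2 * Real.pi * z.im)) with hrdef
  refine Summable.of_nonneg_of_le (fun n => norm_nonneg _) (fun n => ?_)
    (majorant_summable C k (exp_base_pos z.im) (exp_base_lt_one hz))
  rw [norm_mul, exp_norm]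
  have h1 : ‖c n‖ ≤ C * (n + 1 : ℝ) ^ k := by exact_mod_cast hC n
  have h2 : (0:ℝ) ≤ r ^ n := le_of_lt (pow_pos (exp_base_pos z.im) n)
  calc ‖c n‖ * r ^ n ≤ (C * (n + 1 : ℝ) ^ k) * r ^ n :=
        mul_le_mul_of_nonneg_right h1 h2
    _ = C * (n + 1 : ℝ) ^ k * r ^ n := by ring

lemma summable_qexp {c : ℕ → ℂ} (hc : Grw c) {z : ℂ} (hz : 0 < z.im) :
    Summable (fun n : ℕ => c n * Complex.exp (2 * Real.pi * I * z * n)) :=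
  (summable_qexp_norm hc hz).of_norm

/-- Cauchy product of two q-expansions -/
lemma qexp_mul {c d : ℕ → ℂ} (hc : Grw c) (hd : Grw d) {z : ℂ} (hz : 0 < z.im) :
    qexp c z * qexp d z
      = qexp (fun n => ∑ kl ∈ Finset.HasAntidiagonal.antidiagonal n, c kl.1 * d kl.2) z := by
  rw [qexp, qexp, qexp,
    tsum_mul_tsum_eq_tsum_sum_antidiagonal_of_summable_norm
      (summable_qexp_norm hc hz) (summable_qexp_norm hd hz)]
  refine tsum_congr fun n => ?_
  rw [Finset.sum_mul]
  refine Finset.sum_congr rfl fun kl hkl => ?_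
  rw [Finset.HasAntidiagonal.mem_antidiagonal] at hkl
  have he : Complex.exp (2 * Real.pi * I * z * kl.1) * Complex.exp (2 * Real.pi * I * z * kl.2)
      = Complex.exp (2 * Real.pi * I * z * n) := by
    rw [← Complex.exp_add]
    congr 1
    have : ((kl.1 : ℂ)) + (kl.2 : ℂ) = (n : ℂ) := by exact_mod_cast congrArg Nat.cast hkl
    linear_combination (2 * (Real.pi:ℂ) * I * z) * this
  calc c kl.1 * Complex.exp (2 * Real.pi * I * z * kl.1)
        * (d kl.2 * Complex.exp (2 * Real.pi * I * z * kl.2))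
      = c kl.1 * d kl.2 * (Complex.exp (2 * Real.pi * I * z * kl.1)
          * Complex.exp (2 * Real.pi * I * z * kl.2)) := by ring
    _ = c kl.1 * d kl.2 * Complex.exp (2 * Real.pi * I * z * n) := by rw [he]

lemma qexp_smul (α : ℂ) (c : ℕ → ℂ) (z : ℂ) :
    qexp (fun n => α * c n) z = α * qexp c z := by
  rw [qexp, qexp, ← tsum_mul_left]
  exact tsum_congr fun n => by ring

lemma qexp_sub {c d : ℕ → ℂ} (hc : Grw c) (hd : Grw d) {z : ℂ} (hz : 0 < z.im) :
    qexp c z - qexp d z = qexp (fun n => c n - d n) z := by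
  rw [qexp, qexp, qexp, ← Summable.tsum_sub (summable_qexp hc hz) (summable_qexp hd hz)]
  exact tsum_congr fun n => by ring

/-- termwise differentiation of a q-expansion -/
lemma hasDerivAt_qexp {c : ℕ → ℂ} (hc : Grw c) {z : ℂ} (hz : 0 < z.im) :
    HasDerivAt (qexp c) (qexp (fun n => 2 * Real.pi * I * n * c n) z) z := by
  obtain ⟨C, k, hC⟩ := hc
  have hC0 : 0 ≤ C := le_trans (norm_nonneg (c 0)) (by simpa using hC 0)
  set t : Set ℂ := {w : ℂ | z.im / 2 < w.im} with ht_def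
  have ht : IsOpen t := isOpen_lt continuous_const Complex.continuous_im
  have htc : IsPreconnected t := (convex_halfSpace_im_gt (z.im / 2)).isPreconnected
  set r : ℝ := Real.exp (-(2 * Real.pi * (z.im / 2))) with hr_def
  have hr0 : 0 < r := exp_base_pos _
  have hr1 : r < 1 := exp_base_lt_one (by linarith)
  set u : ℕ → ℝ := fun n => (2 * Real.pi * C) * (n + 1 : ℝ) ^ (k + 1) * r ^ n with hu_def
  have hu : Summable u := majorant_summable _ _ hr0 hr1
  have hg : ∀ n : ℕ, ∀ w ∈ t, HasDerivAt (fun w => c n * Complex.exp (2 * Real.pi * I * w * n))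
      (c n * (Complex.exp (2 * Real.pi * I * w * n) * (2 * Real.pi * I * n))) w := by
    intro n w _
    have h0 := ((((hasDerivAt_id w).const_mul (2 * (Real.pi:ℂ) * I)).mul_const
      ((n : ℂ))).cexp).const_mul (c n)
    simpa using h0
  have hg' : ∀ n : ℕ, ∀ w ∈ t,
      ‖c n * (Complex.exp (2 * Real.pi * I * w * n) * (2 * Real.pi * I * n))‖ ≤ u n := by
    intro n w hw
    have hwim : z.im / 2 < w.im := hw
    rw [norm_mul, norm_mul, exp_norm]
    have hb : Real.exp (-(2 * Real.pi * w.im)) ≤ r := by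
      rw [hr_def]
      refine Real.exp_le_exp.mpr ?_
      have := Real.pi_pos
      nlinarith
    have hbn : Real.exp (-(2 * Real.pi * w.im)) ^ n ≤ r ^ n :=
      pow_le_pow_left₀ (le_of_lt (Real.exp_pos _)) hb n
    have hnorm2 : ‖(2 * (Real.pi:ℂ) * I * n)‖ = 2 * Real.pi * n := by
      rw [show 2 * (Real.pi:ℂ) * I * n = ((2 * Real.pi * (n:ℝ) : ℝ) : ℂ) * I by push_cast; ring]
      simp only [norm_mul, Complex.norm_I, Complex.norm_real, mul_one, Real.norm_eq_abs]
      rw [_root_.abs_of_nonneg (by norm_num : (0:ℝ) ≤ 2), _root_.abs_of_nonneg Real.pi_pos.le,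
        _root_.abs_of_nonneg (Nat.cast_nonneg n : (0:ℝ) ≤ (n:ℝ))]
    rw [hnorm2]
    have h1 : ‖c n‖ ≤ C * (n + 1 : ℝ) ^ k := by exact_mod_cast hC n
    have key : ‖c n‖ * (Real.exp (-(2 * Real.pi * w.im)) ^ n * (2 * Real.pi * n))
        ≤ (C * (n + 1 : ℝ) ^ k) * (r ^ n * (2 * Real.pi * (n + 1 : ℝ))) := by
      have e1 : (0:ℝ) ≤ Real.exp (-(2 * Real.pi * w.im)) ^ n * (2 * Real.pi * n) := by positivity
      have e2 : Real.exp (-(2 * Real.pi * w.im)) ^ n * (2 * Real.pi * n)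
          ≤ r ^ n * (2 * Real.pi * (n + 1 : ℝ)) := by
        have : (n:ℝ) ≤ (n + 1 : ℝ) := by linarith
        have h2pi : (0:ℝ) ≤ 2 * Real.pi := by positivity
        calc Real.exp (-(2 * Real.pi * w.im)) ^ n * (2 * Real.pi * n)
            ≤ r ^ n * (2 * Real.pi * n) :=
              mul_le_mul_of_nonneg_right hbn (by positivity)
          _ ≤ r ^ n * (2 * Real.pi * (n + 1 : ℝ)) := by
              refine mul_le_mul_of_nonneg_left ?_ (by positivity)
              refine mul_le_mul_of_nonneg_left this h2pi
      calc ‖c n‖ * (Real.exp (-(2 * Real.pi * w.im)) ^ n * (2 * Real.pi * n))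
          ≤ (C * (n + 1 : ℝ) ^ k) * (Real.exp (-(2 * Real.pi * w.im)) ^ n * (2 * Real.pi * n)) :=
            mul_le_mul_of_nonneg_right h1 e1
        _ ≤ (C * (n + 1 : ℝ) ^ k) * (r ^ n * (2 * Real.pi * (n + 1 : ℝ))) := by
            refine mul_le_mul_of_nonneg_left e2 (by positivity)
    calc ‖c n‖ * (Real.exp (-(2 * Real.pi * w.im)) ^ n * (2 * Real.pi * ↑n))
        ≤ (C * (n + 1 : ℝ) ^ k) * (r ^ n * (2 * Real.pi * (n + 1 : ℝ))) := key
      _ = u n := by simp only [hu_def]; rw [pow_succ]; ring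
  have hzt : z ∈ t := by simp only [ht_def, Set.mem_setOf_eq]; linarith
  have hsum0 : Summable fun n => c n * Complex.exp (2 * Real.pi * I * z * n) :=
    summable_qexp ⟨C, k, hC⟩ hz
  have hder := hasDerivAt_tsum_of_isPreconnected hu ht htc hg hg' hzt hsum0 hzt
  have hval : qexp (fun n => 2 * Real.pi * I * ↑n * c n) z
      = ∑' n : ℕ, c n * (Complex.exp (2 * Real.pi * I * z * ↑n) * (2 * Real.pi * I * ↑n)) := by
    rw [qexp]; exact tsum_congr fun n => by ring
  rw [hval]
  exact hder

end Stmt17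

namespace Stmt17
open Complex Finset

lemma sigma'_le (j n : ℕ) : sigma' j n ≤ (n + 1) ^ (j + 1) := by
  have hsub : n.divisors ⊆ range (n + 1) := by
    intro d hd
    rw [Nat.mem_divisors] at hd
    rw [Finset.mem_range]
    exact Nat.lt_succ_of_le (Nat.le_of_dvd (Nat.pos_of_ne_zero hd.2) hd.1)
  have hcard : n.divisors.card ≤ n + 1 := by
    calc n.divisors.card ≤ (range (n + 1)).card := Finset.card_le_card hsub
      _ = n + 1 := Finset.card_range _
  calc sigma' j n ≤ n.divisors.card • (n + 1) ^ j := by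
        refine Finset.sum_le_card_nsmul _ _ _ fun d hd => ?_
        rw [Nat.mem_divisors] at hd
        exact Nat.pow_le_pow_left
          (le_trans (Nat.le_of_dvd (Nat.pos_of_ne_zero hd.2) hd.1) (Nat.le_succ n)) j
    _ = n.divisors.card * (n + 1) ^ j := smul_eq_mul _ _
    _ ≤ (n + 1) * (n + 1) ^ j := Nat.mul_le_mul_right _ hcard
    _ = (n + 1) ^ (j + 1) := by rw [pow_succ, Nat.mul_comm]

noncomputable def cf (j : ℕ) (β : ℂ) : ℕ → ℂ :=
  fun n => if n = 0 then 1 else β * (sigma' j n : ℂ)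

lemma grw_cf (j : ℕ) (β : ℂ) : Grw (cf j β) := by
  refine ⟨max 1 ‖β‖, j + 1, fun n => ?_⟩
  rcases Nat.eq_zero_or_pos n with rfl | hn
  · have : ‖cf j β 0‖ = 1 := by simp [cf]
    rw [this]
    have h1 : (1:ℝ) ≤ max 1 ‖β‖ := le_max_left _ _
    calc (1:ℝ) ≤ max 1 ‖β‖ := h1
      _ = max 1 ‖β‖ * 1 := (mul_one _).symm
      _ ≤ max 1 ‖β‖ * ((0:ℝ) + 1) ^ (j + 1) := by norm_num
      _ = max 1 ‖β‖ * (((0:ℕ):ℝ) + 1) ^ (j + 1) := by norm_num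
  · have hne : n ≠ 0 := Nat.pos_iff_ne_zero.mp hn
    simp only [cf, if_neg hne]
    rw [norm_mul, Complex.norm_natCast]
    have h1 : (sigma' j n : ℝ) ≤ ((n + 1 : ℕ) : ℝ) ^ (j + 1) := by
      exact_mod_cast Nat.cast_le.mpr (sigma'_le j n)
    calc ‖β‖ * (sigma' j n : ℝ) ≤ ‖β‖ * ((n + 1 : ℕ) : ℝ) ^ (j + 1) :=
          mul_le_mul_of_nonneg_left (by exact_mod_cast h1) (norm_nonneg β)
      _ ≤ max 1 ‖β‖ * ((n + 1 : ℕ) : ℝ) ^ (j + 1) := by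
          refine mul_le_mul_of_nonneg_right (le_max_right _ _) (by positivity)
      _ = max 1 ‖β‖ * ((n : ℝ) + 1) ^ (j + 1) := by push_cast; ring

lemma grw_conv {c d : ℕ → ℂ} (hc : Grw c) (hd : Grw d) :
    Grw (fun n => ∑ kl ∈ Finset.HasAntidiagonal.antidiagonal n, c kl.1 * d kl.2) := by
  obtain ⟨C, k, hC⟩ := hc
  obtain ⟨D, l, hD⟩ := hd
  have hC0 : 0 ≤ C := le_trans (norm_nonneg (c 0)) (by simpa using hC 0)
  have hD0 : 0 ≤ D := le_trans (norm_nonneg (d 0)) (by simpa using hD 0)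
  refine ⟨C * D, k + l + 1, fun n => ?_⟩
  have hbound : ∀ kl ∈ Finset.HasAntidiagonal.antidiagonal n,
      ‖c kl.1 * d kl.2‖ ≤ C * D * ((n:ℝ) + 1) ^ (k + l) := by
    intro kl hkl
    rw [Finset.HasAntidiagonal.mem_antidiagonal] at hkl
    have h1 : ((kl.1 : ℝ) + 1) ^ k ≤ ((n:ℝ) + 1) ^ k := by
      refine pow_le_pow_left₀ (by positivity) ?_ k
      have : kl.1 ≤ n := by omega
      exact_mod_cast by omega
    have h2 : ((kl.2 : ℝ) + 1) ^ l ≤ ((n:ℝ) + 1) ^ l := by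
      refine pow_le_pow_left₀ (by positivity) ?_ l
      have : kl.2 ≤ n := by omega
      exact_mod_cast by omega
    rw [norm_mul]
    calc ‖c kl.1‖ * ‖d kl.2‖
        ≤ (C * ((kl.1:ℝ) + 1) ^ k) * (D * ((kl.2:ℝ) + 1) ^ l) := by
          refine mul_le_mul (hC kl.1) (hD kl.2) (norm_nonneg _) (by positivity)
      _ ≤ (C * ((n:ℝ) + 1) ^ k) * (D * ((n:ℝ) + 1) ^ l) := by
          refine mul_le_mul ?_ ?_ (by positivity) (by positivity)
          · exact mul_le_mul_of_nonneg_left h1 hC0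
          · exact mul_le_mul_of_nonneg_left h2 hD0
      _ = C * D * ((n:ℝ) + 1) ^ (k + l) := by rw [pow_add]; ring
  calc ‖∑ kl ∈ Finset.HasAntidiagonal.antidiagonal n, c kl.1 * d kl.2‖
      ≤ ∑ kl ∈ Finset.HasAntidiagonal.antidiagonal n, ‖c kl.1 * d kl.2‖ := norm_sum_le _ _
    _ ≤ (Finset.HasAntidiagonal.antidiagonal n).card • (C * D * ((n:ℝ) + 1) ^ (k + l)) :=
        Finset.sum_le_card_nsmul _ _ _ hbound
    _ = ((n + 1 : ℕ) : ℝ) * (C * D * ((n:ℝ) + 1) ^ (k + l)) := by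
        rw [Finset.Nat.card_antidiagonal, nsmul_eq_mul]
    _ = C * D * ((n:ℝ) + 1) ^ (k + l + 1) := by push_cast; rw [pow_succ]; ring

lemma qexp_congr {c d : ℕ → ℂ} (z : ℂ) (h : ∀ n, c n = d n) : qexp c z = qexp d z := by
  rw [qexp, qexp]
  exact tsum_congr fun n => by rw [h n]

/-- link with the series appearing in the statement -/
lemma qexp_cf (j : ℕ) (β : ℂ) {z : ℂ} (hz : 0 < z.im) :
    qexp (cf j β) z
      = 1 + β * ∑' n : ℕ, (sigma' j (n+1) : ℂ) * Complex.exp (2 * Real.pi * I * z * (n+1)) := by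
  rw [qexp, Summable.tsum_eq_zero_add (summable_qexp (grw_cf j β) hz)]
  congr 1
  · simp [cf]
  · rw [← tsum_mul_left]
    refine tsum_congr fun n => ?_
    simp only [cf, Nat.succ_ne_zero, if_false]
    push_cast
    ring

end Stmt17

namespace Stmt17
open Complex Finset

lemma conv_coeff_split (β γ : ℂ) (r s : ℕ) (N : ℕ) (hN : 1 ≤ N) :
    ∑ kl ∈ Finset.HasAntidiagonal.antidiagonal N, cf r β kl.1 * cf s γ kl.2
      = γ * (sigma' s N : ℂ) + β * (sigma' r N : ℂ)
        + β * γ * ((Conv r s N : ℤ) : ℂ) := by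
  rw [Finset.Nat.sum_antidiagonal_eq_sum_range_succ_mk, Finset.sum_range_succ,
    Finset.range_eq_Ico, Finset.sum_eq_sum_Ico_succ_bot (by omega : 0 < N)]
  have h0 : cf r β 0 * cf s γ (N - 0) = γ * (sigma' s N : ℂ) := by
    rw [cf, cf, if_pos rfl, if_neg (by omega), Nat.sub_zero]; ring
  have hN' : cf r β N * cf s γ (N - N) = β * (sigma' r N : ℂ) := by
    rw [cf, cf, if_neg (by omega), Nat.sub_self, if_pos rfl]; ring
  have hmid : ∑ k ∈ Ico 1 N, cf r β k * cf s γ (N - k)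
      = β * γ * ((Conv r s N : ℤ) : ℂ) := by
    have hstep : ∀ k ∈ Ico 1 N, cf r β k * cf s γ (N - k)
        = β * γ * ((sigma' r k : ℂ) * (sigma' s (N - k) : ℂ)) := by
      intro k hk; rw [mem_Ico] at hk
      rw [cf, cf, if_neg (by omega), if_neg (by omega)]; ring
    rw [Finset.sum_congr rfl hstep, ← Finset.mul_sum]
    congr 1
    simp only [Conv, Sg]
    push_cast
    rfl
  rw [h0, hN', hmid]; ring

lemma coeff1 (n : ℕ) :
    (∑ kl ∈ Finset.HasAntidiagonal.antidiagonal n, cf 1 (-24) kl.1 * cf 1 (-24) kl.2) - cf 3 240 n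
      = 12 * ((n : ℂ) * cf 1 (-24) n) := by
  rcases Nat.eq_zero_or_pos n with rfl | hn
  · simp [cf]
  · have hsplit := conv_coeff_split (-24) (-24) 1 1 n hn
    have hFc : ((840 * Conv 1 1 n : ℤ) : ℂ)
        = ((350 * Sg 3 n + 70 * Sg 1 n - 420 * (n:ℤ) * Sg 1 n : ℤ) : ℂ) := by
      rw [F1 n]
    simp only [Sg] at hFc
    push_cast at hFc
    have hn0 : ¬ n = 0 := by omega
    rw [hsplit]
    simp only [cf, if_neg hn0]
    linear_combination (24/35 : ℂ) * hFc

lemma coeff2 (n : ℕ) :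
    (∑ kl ∈ Finset.HasAntidiagonal.antidiagonal n, cf 1 (-24) kl.1 * cf 3 240 kl.2) - cf 5 (-504) n
      = 3 * ((n : ℂ) * cf 3 240 n) := by
  rcases Nat.eq_zero_or_pos n with rfl | hn
  · simp [cf]
  · have hsplit := conv_coeff_split (-24) 240 1 3 n hn
    have hFc : ((3360 * Conv 1 3 n : ℤ) : ℂ)
        = ((294 * Sg 5 n + 140 * Sg 3 n - 14 * Sg 1 n - 420 * (n:ℤ) * Sg 3 n : ℤ) : ℂ) := by
      rw [F2 n]
    simp only [Sg] at hFc
    push_cast at hFc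
    have hn0 : ¬ n = 0 := by omega
    rw [hsplit]
    simp only [cf, if_neg hn0]
    linear_combination (-12/7 : ℂ) * hFc

lemma coeff3 (n : ℕ) :
    (∑ kl ∈ Finset.HasAntidiagonal.antidiagonal n, cf 1 (-24) kl.1 * cf 5 (-504) kl.2)
      - (∑ kl ∈ Finset.HasAntidiagonal.antidiagonal n, cf 3 240 kl.1 * cf 3 240 kl.2)
      = 2 * ((n : ℂ) * cf 5 (-504) n) := by
  rcases Nat.eq_zero_or_pos n with rfl | hn
  · simp [cf]
  · have hsplit1 := conv_coeff_split (-24) (-504) 1 5 n hn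
    have hsplit2 := conv_coeff_split 240 240 3 3 n hn
    have hF3c : ((5040 * Conv 1 5 n + 5880 * Conv 3 3 n : ℤ) : ℂ)
        = ((249 * Sg 7 n + 210 * Sg 5 n - 49 * Sg 3 n + 10 * Sg 1 n
            - 420 * (n:ℤ) * Sg 5 n : ℤ) : ℂ) := by
      rw [F3 n]
    have hF4c : ((1680 * Conv 3 3 n : ℤ) : ℂ) = ((14 * Sg 7 n - 14 * Sg 3 n : ℤ) : ℂ) := by
      rw [F4 n]
    simp only [Sg] at hF3c hF4c
    push_cast at hF3c hF4c
    have hn0 : ¬ n = 0 := by omega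
    rw [hsplit1, hsplit2]
    simp only [cf, if_neg hn0]
    linear_combination (12/5 : ℂ) * hF3c - (1494/35 : ℂ) * hF4c

end Stmt17

namespace Stmt17

lemma g1_eq {w : ℂ} (hw : 0 < w.im) : g₁ w = a₁ * qexp (cf 1 (-24)) w := by
  rw [qexp_cf 1 (-24) hw]
  unfold g₁
  norm_num

lemma g2_eq {w : ℂ} (hw : 0 < w.im) : g₂ w = a₂ * qexp (cf 3 240) w := by
  rw [qexp_cf 3 240 hw]
  unfold g₂
  norm_num

lemma g3_eq {w : ℂ} (hw : 0 < w.im) : g₃ w = a₃ * qexp (cf 5 (-504)) w := by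
  rw [qexp_cf 5 (-504) hw]
  unfold g₃
  norm_num

lemma ha12 : (2 * (Real.pi : ℂ) * I) = 12 * a₁ := by
  simp only [a₁]; ring

lemma ha2 : a₂ = 12 * a₁ ^ 2 := by simp only [a₁, a₂]

lemma ha3 : a₃ = 8 * a₁ ^ 3 := by simp only [a₁, a₃]

lemma upper_mem {z : ℂ} (hz : 0 < z.im) : {w : ℂ | 0 < w.im} ∈ nhds z :=
  (isOpen_lt continuous_const Complex.continuous_im).mem_nhds hz

/-- derivative of a `qexp`-representable `g`, transported -/
lemma hasDerivAt_g {g : ℂ → ℂ} {α : ℂ} {c : ℕ → ℂ} (hc : Grw c)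
    (he : ∀ w : ℂ, 0 < w.im → g w = α * qexp c w) {z : ℂ} (hz : 0 < z.im) :
    HasDerivAt g (α * qexp (fun n => 2 * Real.pi * I * n * c n) z) z := by
  refine HasDerivAt.congr_of_eventuallyEq ((hasDerivAt_qexp hc hz).const_mul α) ?_
  exact Filter.eventuallyEq_of_mem (upper_mem hz) fun w hw => he w hw

lemma qexp_deriv_scale (c : ℕ → ℂ) (z : ℂ) :
    qexp (fun n => 2 * Real.pi * I * n * c n) z
      = (12 * a₁) * qexp (fun n => (n : ℂ) * c n) z := by
  rw [← qexp_smul (12 * a₁) (fun n => (n : ℂ) * c n) z]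
  refine qexp_congr z fun n => ?_
  rw [show (2 * (Real.pi:ℂ) * I * n) = (2 * (Real.pi:ℂ) * I) * n by ring, ha12]
  ring

end Stmt17

namespace Stmt17
open Complex Finset

lemma part1 {z : ℂ} (hz : 0 < z.im) : HasDerivAt g₁ (g₁ z ^ 2 - (1/12) * g₂ z) z := by
  have hgrw1 := grw_cf 1 (-24 : ℂ)
  have hgrw2 := grw_cf 3 (240 : ℂ)
  have hd := hasDerivAt_g hgrw1 (fun w hw => g1_eq hw) hz
  have hval : a₁ * qexp (fun n => 2 * Real.pi * I * n * cf 1 (-24) n) z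
      = g₁ z ^ 2 - (1/12) * g₂ z := by
    have hmul := qexp_mul hgrw1 hgrw1 hz
    have hsub := qexp_sub (grw_conv hgrw1 hgrw1) hgrw2 hz
    have hcg : qexp (fun n => (∑ kl ∈ Finset.HasAntidiagonal.antidiagonal n,
          cf 1 (-24) kl.1 * cf 1 (-24) kl.2) - cf 3 240 n) z
        = qexp (fun n => 12 * ((n:ℂ) * cf 1 (-24) n)) z :=
      qexp_congr z fun n => coeff1 n
    have hsc := qexp_smul (12 : ℂ) (fun n => (n:ℂ) * cf 1 (-24) n) z
    have key : qexp (fun n => ∑ kl ∈ Finset.HasAntidiagonal.antidiagonal n,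
          cf 1 (-24) kl.1 * cf 1 (-24) kl.2) z - qexp (cf 3 240) z
        = 12 * qexp (fun n => (n:ℂ) * cf 1 (-24) n) z := by
      rw [hsub]
      beta_reduce
      rw [hcg, hsc]
    rw [g1_eq hz, g2_eq hz, qexp_deriv_scale, ha2]
    linear_combination (-(a₁^2)) * key - a₁^2 * hmul
  exact hval ▸ hd

lemma part2 {z : ℂ} (hz : 0 < z.im) :
    HasDerivAt g₂ (4 * g₁ z * g₂ z - 6 * g₃ z) z := by
  have hgrw1 := grw_cf 1 (-24 : ℂ)
  have hgrw2 := grw_cf 3 (240 : ℂ)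
  have hgrw3 := grw_cf 5 (-504 : ℂ)
  have hd := hasDerivAt_g hgrw2 (fun w hw => g2_eq hw) hz
  have hval : a₂ * qexp (fun n => 2 * Real.pi * I * n * cf 3 240 n) z
      = 4 * g₁ z * g₂ z - 6 * g₃ z := by
    have hmul := qexp_mul hgrw1 hgrw2 hz
    have hsub := qexp_sub (grw_conv hgrw1 hgrw2) hgrw3 hz
    have hcg : qexp (fun n => (∑ kl ∈ Finset.HasAntidiagonal.antidiagonal n,
          cf 1 (-24) kl.1 * cf 3 240 kl.2) - cf 5 (-504) n) z
        = qexp (fun n => 3 * ((n:ℂ) * cf 3 240 n)) z :=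
      qexp_congr z fun n => coeff2 n
    have hsc := qexp_smul (3 : ℂ) (fun n => (n:ℂ) * cf 3 240 n) z
    have key : qexp (fun n => ∑ kl ∈ Finset.HasAntidiagonal.antidiagonal n,
          cf 1 (-24) kl.1 * cf 3 240 kl.2) z - qexp (cf 5 (-504)) z
        = 3 * qexp (fun n => (n:ℂ) * cf 3 240 n) z := by
      rw [hsub]
      beta_reduce
      rw [hcg, hsc]
    rw [g1_eq hz, g2_eq hz, g3_eq hz, qexp_deriv_scale, ha2, ha3]
    linear_combination (-48*a₁^3) * key - 48*a₁^3 * hmul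
  exact hval ▸ hd

lemma part3 {z : ℂ} (hz : 0 < z.im) :
    HasDerivAt g₃ (6 * g₁ z * g₃ z - (1/3) * g₂ z ^ 2) z := by
  have hgrw1 := grw_cf 1 (-24 : ℂ)
  have hgrw2 := grw_cf 3 (240 : ℂ)
  have hgrw3 := grw_cf 5 (-504 : ℂ)
  have hd := hasDerivAt_g hgrw3 (fun w hw => g3_eq hw) hz
  have hval : a₃ * qexp (fun n => 2 * Real.pi * I * n * cf 5 (-504) n) z
      = 6 * g₁ z * g₃ z - (1/3) * g₂ z ^ 2 := by
    have hmul13 := qexp_mul hgrw1 hgrw3 hz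
    have hmul22 := qexp_mul hgrw2 hgrw2 hz
    have hsub := qexp_sub (grw_conv hgrw1 hgrw3) (grw_conv hgrw2 hgrw2) hz
    have hcg : qexp (fun n => (∑ kl ∈ Finset.HasAntidiagonal.antidiagonal n,
          cf 1 (-24) kl.1 * cf 5 (-504) kl.2)
          - ∑ kl ∈ Finset.HasAntidiagonal.antidiagonal n, cf 3 240 kl.1 * cf 3 240 kl.2) z
        = qexp (fun n => 2 * ((n:ℂ) * cf 5 (-504) n)) z :=
      qexp_congr z fun n => coeff3 n
    have hsc := qexp_smul (2 : ℂ) (fun n => (n:ℂ) * cf 5 (-504) n) z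
    have key : qexp (fun n => ∑ kl ∈ Finset.HasAntidiagonal.antidiagonal n,
          cf 1 (-24) kl.1 * cf 5 (-504) kl.2) z
          - qexp (fun n => ∑ kl ∈ Finset.HasAntidiagonal.antidiagonal n,
            cf 3 240 kl.1 * cf 3 240 kl.2) z
        = 2 * qexp (fun n => (n:ℂ) * cf 5 (-504) n) z := by
      rw [hsub]
      beta_reduce
      rw [hcg, hsc]
    rw [g1_eq hz, g2_eq hz, g3_eq hz, qexp_deriv_scale, ha2, ha3]
    linear_combination (-48*a₁^4) * key - 48*a₁^4 * hmul13 + 48*a₁^4 * hmul22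
  exact hval ▸ hd

end Stmt17


/-- the Ramanujan relations
g₁' = g₁² - g₂/12, g₂' = 4g₁g₂ - 6g₃, g₃' = 6g₁g₃ - g₂²/3 on the upper half plane. -/
theorem stmt17 (z : ℂ) (hz : 0 < z.im) :
    HasDerivAt g₁ (g₁ z ^ 2 - (1 / 12) * g₂ z) z ∧
    HasDerivAt g₂ (4 * g₁ z * g₂ z - 6 * g₃ z) z ∧
    HasDerivAt g₃ (6 * g₁ z * g₃ z - (1 / 3) * g₂ z ^ 2) z :=
  ⟨Stmt17.part1 hz, Stmt17.part2 hz, Stmt17.part3 hz⟩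
end
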